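/- arXiv:1808.02986 — 4 statements merged into one kernel-verified Lean document; each statement's English description precedes it below -/
import Mathlib

section
/- If a(k) > 0, Δ_ℓ(a(k)w(k)) < 0 for all k ≥ k₁ along the arithmetic progression, and there exists c < 0 with a(k)w(k) ≤ c for all k ≥ k₁, and Σ_{r=0}^∞ 1/a(k₁+rℓ) = ∞, then Σ_{r=0}^{n-1} w(k₁+rℓ) → -∞ as n → ∞; in particular any function v with Δ_ℓ v = w satisfies v(k) → -∞. -/
noncomputable def Dl (ℓ : ℝ) (u : ℝ → ℝ) : ℝ → ℝ := fun k => u (k + ℓ) - u k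

theorem summation_to_neg_infinity (ℓ k₁ : ℝ) (hℓ : 0 < ℓ) (a w : ℝ → ℝ)
    (ha : ∀ k : ℝ, 0 < a k)
    (hdecr : ∀ n : ℕ, Dl ℓ (fun k => a k * w k) (k₁ + n * ℓ) < 0)
    (c : ℝ) (hc : c < 0)
    (hbound : ∀ n : ℕ, a (k₁ + n * ℓ) * w (k₁ + n * ℓ) ≤ c)
    (hdiv : Filter.Tendsto (fun n : ℕ => ∑ r ∈ Finset.range n, 1 / a (k₁ + r * ℓ))
      Filter.atTop Filter.atTop) :
    Filter.Tendsto (fun n : ℕ => ∑ r ∈ Finset.range n, w (k₁ + r * ℓ))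
      Filter.atTop Filter.atBot ∧
    ∀ v : ℝ → ℝ, (∀ k : ℝ, Dl ℓ v k = w k) →
      Filter.Tendsto (fun n : ℕ => v (k₁ + n * ℓ)) Filter.atTop Filter.atBot := by
  have hw : ∀ n : ℕ, w (k₁ + n * ℓ) ≤ c * (1 / a (k₁ + n * ℓ)) := by
    intro n
    have h := hbound n
    have hpos := ha (k₁ + n * ℓ)
    rw [mul_one_div, le_div_iff₀ hpos, mul_comm]
    exact h
  have hS : Filter.Tendsto (fun n : ℕ => ∑ r ∈ Finset.range n, w (k₁ + r * ℓ))
      Filter.atTop Filter.atBot := by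
    have hmul : Filter.Tendsto
        (fun n : ℕ => c * ∑ r ∈ Finset.range n, 1 / a (k₁ + r * ℓ))
        Filter.atTop Filter.atBot := by
      exact Filter.Tendsto.const_mul_atTop_of_neg hc hdiv
    refine Filter.tendsto_atBot_mono (fun n => ?_) hmul
    rw [Finset.mul_sum]
    exact Finset.sum_le_sum fun r _ => hw r
  refine ⟨hS, fun v hv => ?_⟩
  have key : ∀ n : ℕ, v (k₁ + n * ℓ) = v k₁ + ∑ r ∈ Finset.range n, w (k₁ + r * ℓ) := by
    intro n
    induction n with
    | zero => simp
    | succ m ih =>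
      have h1 : (k₁ + (m : ℝ) * ℓ) + ℓ = k₁ + (m + 1 : ℕ) * ℓ := by push_cast; ring
      have h2 := hv (k₁ + m * ℓ)
      simp only [Dl] at h2
      rw [Finset.sum_range_succ, ← add_assoc, ← ih, ← h2, h1]; ring
  have : Filter.Tendsto (fun n : ℕ => v k₁ + ∑ r ∈ Finset.range n, w (k₁ + r * ℓ))
      Filter.atTop Filter.atBot := Filter.tendsto_atBot_add_const_left _ _ hS
  exact this.congr fun n => (key n).symm
end

section
/- (First-order oscillation criterion, limsup version.) Suppose p(k) ≥ 0 along the progression {k₀ + nℓ} and limsup_{k→∞} Σ_{r=0}^{ρ} p(k - ρℓ + rℓ) > 1, where ρ ≥ 1 is an integer. Then the inequality Δ_ℓ y(k) + p(k) y(k - ρℓ) ≤ 0 has no eventually positive solution along the progression. -/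
theorem oscillation_limsup (ℓ k₀ : ℝ) (hℓ : 0 < ℓ) (p : ℝ → ℝ) (ρ : ℕ) (hρ : 1 ≤ ρ)
    (hp : ∀ n : ℕ, 0 ≤ p (k₀ + n * ℓ))
    (hsum : 1 < Filter.limsup
      (fun n : ℕ => ∑ r ∈ Finset.range (ρ + 1), p (k₀ + n * ℓ - ρ * ℓ + r * ℓ))
      Filter.atTop)
    (y : ℝ → ℝ)
    (hy : ∀ n : ℕ, Dl ℓ y (k₀ + n * ℓ) + p (k₀ + n * ℓ) * y (k₀ + n * ℓ - ρ * ℓ) ≤ 0) :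
    ¬ (∃ N : ℕ, ∀ n : ℕ, N ≤ n → 0 < y (k₀ + n * ℓ)) := by
  rintro ⟨N, hN⟩
  set a : ℕ → ℝ := fun n => y (k₀ + n * ℓ) with ha
  set q : ℕ → ℝ := fun n => p (k₀ + n * ℓ) with hq
  -- recurrence in natural indices
  have key : ∀ n : ℕ, ρ ≤ n → a (n + 1) - a n + q n * a (n - ρ) ≤ 0 := by
    intro n hn
    have h := hy n
    have e1 : k₀ + (n : ℝ) * ℓ + ℓ = k₀ + ((n + 1 : ℕ) : ℝ) * ℓ := by push_cast; ring
    have e2 : k₀ + (n : ℝ) * ℓ - (ρ : ℝ) * ℓ = k₀ + ((n - ρ : ℕ) : ℝ) * ℓ := by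
      push_cast [Nat.cast_sub hn]; ring
    simpa [Dl, ha, hq, e1, e2] using h
  -- monotonicity
  have step : ∀ n : ℕ, N + ρ ≤ n → a (n + 1) ≤ a n := by
    intro n hn
    have hρn : ρ ≤ n := le_trans (Nat.le_add_left ρ N) hn
    have hq0 : 0 ≤ q n := hp n
    have hpos : 0 < a (n - ρ) := hN _ (by omega)
    have := key n hρn
    nlinarith [mul_nonneg hq0 hpos.le]
  have mono : ∀ m n : ℕ, N + ρ ≤ m → m ≤ n → a n ≤ a m := by
    intro m n hm hmn
    induction n with
    | zero => omega
    | succ k ih =>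
      rcases Nat.lt_or_ge m (k + 1) with h | h
      · have hk : m ≤ k := by omega
        exact le_trans (step k (by omega)) (ih hk)
      · have : m = k + 1 := by omega
        simp [this]
  -- the key estimate
  have main : ∀ n : ℕ, N + 3 * ρ ≤ n →
      (∑ r ∈ Finset.range (ρ + 1), q (n - ρ + r)) ≤ 1 := by
    intro n hn
    set m := n - ρ with hm
    have hmge : N + 2 * ρ ≤ m := by omega
    have hampos : 0 < a m := hN _ (by omega)
    -- sum the recurrence
    have hsum1 : ∑ r ∈ Finset.range (ρ + 1),
        (a (m + r + 1) - a (m + r) + q (m + r) * a (m + r - ρ)) ≤ 0 := by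
      apply Finset.sum_nonpos
      intro r hr
      exact key (m + r) (by omega)
    have htel : ∑ r ∈ Finset.range (ρ + 1), (a (m + r + 1) - a (m + r))
        = a (m + ρ + 1) - a m := by
      have := Finset.sum_range_sub (fun r => a (m + r)) (ρ + 1)
      simpa [add_assoc] using this
    have hlow : (∑ r ∈ Finset.range (ρ + 1), q (m + r)) * a m ≤
        ∑ r ∈ Finset.range (ρ + 1), q (m + r) * a (m + r - ρ) := by
      rw [Finset.sum_mul]
      apply Finset.sum_le_sum
      intro r hr
      have hr' : r ≤ ρ := by simpa [Nat.lt_succ_iff] using hr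
      have hle : a m ≤ a (m + r - ρ) := by
        apply mono _ _ (by omega) (by omega)
      exact mul_le_mul_of_nonneg_left hle (hp _)
    have hfin : (∑ r ∈ Finset.range (ρ + 1), q (m + r)) * a m + a (m + ρ + 1) ≤ a m := by
      rw [Finset.sum_add_distrib, htel] at hsum1
      linarith
    have hap : 0 < a (m + ρ + 1) := hN _ (by omega)
    have : (∑ r ∈ Finset.range (ρ + 1), q (m + r)) * a m ≤ 1 * a m := by linarith
    exact le_of_mul_le_mul_right (by simpa using this) hampos
  -- rewrite the limsup sequence
  have hev : ∀ᶠ n in Filter.atTop,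
      (fun n : ℕ => ∑ r ∈ Finset.range (ρ + 1), p (k₀ + n * ℓ - ρ * ℓ + r * ℓ)) n ≤ 1 := by
    filter_upwards [Filter.eventually_atTop.2 ⟨N + 3 * ρ, fun n hn => hn⟩] with n hn
    have hρn : ρ ≤ n := by omega
    have heq : ∀ r ∈ Finset.range (ρ + 1),
        p (k₀ + n * ℓ - ρ * ℓ + r * ℓ) = q (n - ρ + r) := by
      intro r hr
      have : k₀ + (n : ℝ) * ℓ - (ρ : ℝ) * ℓ + (r : ℝ) * ℓ = k₀ + ((n - ρ + r : ℕ) : ℝ) * ℓ := by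
        push_cast [Nat.cast_sub hρn]; ring
      simp [hq, this]
    rw [Finset.sum_congr rfl heq]
    exact main n hn
  have hcb : Filter.IsCoboundedUnder (· ≤ ·)
      (Filter.atTop : Filter ℕ)
      (fun n : ℕ => ∑ r ∈ Finset.range (ρ + 1), p (k₀ + n * ℓ - ρ * ℓ + r * ℓ)) := by
    apply Filter.IsCoboundedUnder.of_frequently_ge (a := 0)
    apply Filter.Eventually.frequently
    filter_upwards [Filter.eventually_atTop.2 ⟨ρ, fun n hn => hn⟩] with n hn
    apply Finset.sum_nonneg
    intro r hr
    have : k₀ + (n : ℝ) * ℓ - (ρ : ℝ) * ℓ + (r : ℝ) * ℓ = k₀ + ((n - ρ + r : ℕ) : ℝ) * ℓ := by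
      push_cast [Nat.cast_sub hn]; ring
    rw [this]
    exact hp _
  have := Filter.limsup_le_of_le hcb hev
  linarith
end

section
/- If x(k) > 0 and x(τ(k)) > 0 eventually for a solution of the neutral equation, and f(u) ≥ Lu for u > 0, then with P(k) = min{q(k), q(τ(k))} and z(k) = x(k) + p·x(τ(k)) (0 ≤ p constant), the combined inequality Δ_ℓ(a(k)Δ_ℓ^{m-1}z(k)) + L·P(k)·z(k-ρℓ) + p·Δ_ℓ(a(τ(k))Δ_ℓ^{m-1}z(τ(k))) ≤ 0 holds eventually, where τ(k) = k + τ with τ a fixed multiple of ℓ. -/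
theorem combined_inequality (ℓ k₀ : ℝ) (hℓ : 0 < ℓ) (m : ℕ) (hm : 2 ≤ m)
    (a q x : ℝ → ℝ) (f : ℝ → ℝ) (ρ : ℕ) (p L : ℝ) (hp : 0 ≤ p) (hL : 0 < L)
    (τ₀ : ℝ) (t : ℤ) (hτ : τ₀ = t * ℓ)
    (τ : ℝ → ℝ) (hτdef : ∀ k, τ k = k + τ₀)
    (ha : ∀ k, 0 < a k) (hq : ∀ k, 0 < q k)
    (hf : ∀ u : ℝ, 0 < u → L * u ≤ f u)
    (z : ℝ → ℝ) (hz : ∀ k, z k = x k + p * x (τ k))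
    (P : ℝ → ℝ) (hP : ∀ k, P k = min (q k) (q (τ k)))
    (K : ℝ)
    (heq : ∀ k : ℝ, K ≤ k →
      Dl ℓ (fun s => a s * (Dl ℓ)^[m - 1] z s) k + q k * f (x (k - ρ * ℓ)) = 0)
    (hxpos : ∀ k : ℝ, K ≤ k → 0 < x (k - ρ * ℓ) ∧ 0 < x (τ (k - ρ * ℓ))) :
    ∃ K' : ℝ, ∀ k : ℝ, K' ≤ k →
      Dl ℓ (fun s => a s * (Dl ℓ)^[m - 1] z s) k + L * P k * z (k - ρ * ℓ) +
        p * Dl ℓ (fun s => a (τ s) * (Dl ℓ)^[m - 1] z (τ s)) k ≤ 0 := by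
  refine ⟨max K (K - τ₀), fun k hk => ?_⟩
  have hk1 : K ≤ k := le_trans (le_max_left _ _) hk
  have hk2 : K ≤ k + τ₀ := by
    have := le_trans (le_max_right _ _) hk; linarith
  have e1 := heq k hk1
  have e2 := heq (k + τ₀) hk2
  have hx := hxpos k hk1
  have hf1 := hf _ hx.1
  have hf2 := hf _ hx.2
  have hq1 : P k ≤ q k := by rw [hP]; exact min_le_left _ _
  have hq2 : P k ≤ q (τ k) := by rw [hP]; exact min_le_right _ _
  have I1 : L * P k * x (k - ρ * ℓ) ≤ q k * f (x (k - ρ * ℓ)) := by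
    nlinarith [hq k, mul_pos hL hx.1]
  have I2 : L * P k * x (τ (k - ρ * ℓ)) ≤ q (τ k) * f (x (τ (k - ρ * ℓ))) := by
    nlinarith [hq (τ k), mul_pos hL hx.2]
  have I2' : p * (L * P k * x (τ (k - ρ * ℓ))) ≤ p * (q (τ k) * f (x (τ (k - ρ * ℓ)))) :=
    mul_le_mul_of_nonneg_left I2 hp
  have e2' : p * (Dl ℓ (fun s => a s * (Dl ℓ)^[m - 1] z s) (k + τ₀) +
      q (k + τ₀) * f (x (k + τ₀ - ρ * ℓ))) = 0 := by rw [e2, mul_zero]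
  simp only [Dl, hτdef, hz] at e1 e2' I1 I2' ⊢
  ring_nf at e1 e2' I1 I2' ⊢
  linarith
end

section
/- (Riccati-type bound.) Let z be such that Δ_ℓ^{m-2}z(k) > 0, Δ_ℓ^{m-1}z(k) < 0 and a(k)Δ_ℓ^{m-1}z(k) is decreasing, where a(k) > 0 and δ(k) = Σ_{r=0}^∞ 1/a(k+rℓ) < ∞. Then defining w(k) = a(k)Δ_ℓ^{m-1}z(k)/Δ_ℓ^{m-2}z(k), one has -1 ≤ w(k)δ(k) ≤ 0 for all large k in the progression. -/
theorem riccati_bound (ℓ k₀ : ℝ) (hℓ : 0 < ℓ) (m : ℕ) (hm : 2 ≤ m)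
    (a z : ℝ → ℝ) (ha : ∀ k, 0 < a k)
    (hz2 : ∀ n : ℕ, 0 < (Dl ℓ)^[m - 2] z (k₀ + n * ℓ))
    (hz1 : ∀ n : ℕ, (Dl ℓ)^[m - 1] z (k₀ + n * ℓ) < 0)
    (hdecr : ∀ n : ℕ,
      a (k₀ + (n + 1) * ℓ) * (Dl ℓ)^[m - 1] z (k₀ + (n + 1) * ℓ) ≤
        a (k₀ + n * ℓ) * (Dl ℓ)^[m - 1] z (k₀ + n * ℓ))
    (δ : ℕ → ℝ)
    (hδ : ∀ n : ℕ, HasSum (fun r : ℕ => 1 / a (k₀ + n * ℓ + r * ℓ)) (δ n))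
    (w : ℕ → ℝ)
    (hw : ∀ n, w n = a (k₀ + n * ℓ) * (Dl ℓ)^[m - 1] z (k₀ + n * ℓ) /
      (Dl ℓ)^[m - 2] z (k₀ + n * ℓ)) :
    ∃ N : ℕ, ∀ n : ℕ, N ≤ n → -1 ≤ w n * δ n ∧ w n * δ n ≤ 0 := by
  refine ⟨0, fun n _ => ?_⟩
  set g : ℕ → ℝ := fun j => (Dl ℓ)^[m - 2] z (k₀ + j * ℓ) with hg
  set b : ℕ → ℝ := fun j => a (k₀ + j * ℓ) * (Dl ℓ)^[m - 1] z (k₀ + j * ℓ) with hb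
  have hgpos : ∀ j, 0 < g j := hz2
  have hbneg : ∀ j, b j < 0 := fun j => mul_neg_of_pos_of_neg (ha _) (hz1 j)
  have hbstep : ∀ j : ℕ, b (j + 1) ≤ b j := by
    intro j
    have := hdecr j
    simp only [hb]
    push_cast
    push_cast at this
    exact this
  have hbmono : ∀ j r : ℕ, b (j + r) ≤ b j := by
    intro j r
    induction r with
    | zero => simp
    | succ r ih => exact le_trans (hbstep (j + r)) ih
  have hm1 : m - 1 = (m - 2) + 1 := by omega
  have hstep : ∀ j : ℕ, g (j + 1) - g j = (Dl ℓ)^[m - 1] z (k₀ + j * ℓ) := by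
    intro j
    rw [hm1, Function.iterate_succ_apply']
    simp only [hg, Dl]
    push_cast
    ring_nf
  have key : ∀ N : ℕ,
      g (n + N) ≤ g n + b n * ∑ r ∈ Finset.range N, 1 / a (k₀ + n * ℓ + r * ℓ) := by
    intro N
    induction N with
    | zero => simp
    | succ N ih =>
      have harg : k₀ + (n : ℝ) * ℓ + (N : ℝ) * ℓ = k₀ + ((n + N : ℕ) : ℝ) * ℓ := by
        push_cast; ring
      have hd : g (n + N + 1) - g (n + N) = b (n + N) / a (k₀ + ((n + N : ℕ) : ℝ) * ℓ) := by
        rw [hstep (n + N)]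
        simp only [hb]
        rw [mul_div_cancel_left₀ _ (ha _).ne']
      have hle : b (n + N) / a (k₀ + ((n + N : ℕ) : ℝ) * ℓ)
          ≤ b n / a (k₀ + ((n + N : ℕ) : ℝ) * ℓ) :=
        div_le_div_of_nonneg_right (hbmono n N) (ha _).le
      calc g (n + (N + 1)) = g (n + N) + (g (n + N + 1) - g (n + N)) := by ring_nf
        _ ≤ g n + b n * ∑ r ∈ Finset.range N, 1 / a (k₀ + n * ℓ + r * ℓ)
              + b n / a (k₀ + ((n + N : ℕ) : ℝ) * ℓ) := by
            rw [hd]; exact add_le_add ih hle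
        _ = g n + b n * ∑ r ∈ Finset.range (N + 1), 1 / a (k₀ + n * ℓ + r * ℓ) := by
            rw [Finset.sum_range_succ, harg]; ring
  have hlim : Filter.Tendsto
      (fun N => g n + b n * ∑ r ∈ Finset.range N, 1 / a (k₀ + n * ℓ + r * ℓ))
      Filter.atTop (nhds (g n + b n * δ n)) :=
    Filter.Tendsto.add tendsto_const_nhds ((hδ n).tendsto_sum_nat.const_mul _)
  have hkey : 0 ≤ g n + b n * δ n :=
    ge_of_tendsto' hlim fun N => le_trans (hgpos (n + N)).le (key N)
  have hδnn : 0 ≤ δ n := (hδ n).nonneg fun r => le_of_lt (by exact one_div_pos.mpr (ha _))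
  have hwδ : w n * δ n = b n * δ n / g n := by
    rw [hw n]
    simp only [hb, hg]
    ring
  constructor
  · rw [hwδ, le_div_iff₀ (hgpos n)]
    nlinarith [hkey]
  · rw [hwδ]
    apply div_nonpos_of_nonpos_of_nonneg _ (hgpos n).le
    exact mul_nonpos_of_nonpos_of_nonneg (hbneg n).le hδnn
end
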